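/- Let F_q be a finite field of characteristic p, let n be an odd prime different from p, and let k* be the integer nearest to n/4 (that is, k* = k if n = 4k + 1 and k* = k + 1 if n = 4k + 3). Then the polynomial F(X) = Σ_{i ∈ NR(n)} X^i, where NR(n) ⊆ {1, …, n−1} is the set of quadratic nonresidues modulo n, has unit image in F_q[X]/(Q_n) if and only if p does not divide k*. -/

import Mathlib

open Polynomial Finset
open scoped Classical

/-!
Let `x` be the image of `X` in `F[X]/(Q_n)`. Then `x ^ n = 1`, so `t ↦ x ^ t` is an additive
character `ψ` of `ZMod n`, and its values sum to `Q_n(x) = 0`. The image of the polynomial `F` is the Gauss period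
`η₁ = ∑_{t ∈ NR} ψ t`; with `η₀ = ∑_{t ∈ QR} ψ t` the periods satisfy `η₀ + η₁ = -1`. Expanding
`η₁ η₀` and letting multiplication by a nonresidue permute residues and nonresidues reduces it to
counting the nonresidues `c` with `1 + c` a residue, a nonresidue, or zero (inversion `c ↦ c⁻¹`
matches the first two), which gives `η₁ η₀ = -k*` if `-1` is a square and `k*` otherwise.
Hence `F (F + 1) = -η₁ η₀ = ±k*`: if `p ∤ k*` this makes `F` a unit, and if `p ∣ k*` a unit `F`
would force `F + 1 = 0`, impossible since `F + 1` has degree `< n` and unequal coefficients at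
`1` and `X`, while every such multiple of `Q_n` is a constant times `Q_n`.
-/

section NonsquarePeriods

lemma isSquare_mul_iff_of_ne_zero {K : Type*} [Field K] [Finite K] {a b : K} (ha : a ≠ 0)
    (hb : b ≠ 0) :
    IsSquare (a * b) ↔ (IsSquare a ↔ IsSquare b) := by
  have := Fintype.ofFinite K
  rw [← quadraticChar_one_iff_isSquare ha, ← quadraticChar_one_iff_isSquare hb,
    ← quadraticChar_one_iff_isSquare (mul_ne_zero ha hb), map_mul]
  rcases quadraticChar_dichotomy ha with h | h <;>
    rcases quadraticChar_dichotomy hb with h' | h' <;> simp [h, h']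

variable {K : Type*} [Field K] [Fintype K]

noncomputable def nonsquares (K : Type*) [Field K] [Fintype K] : Finset K :=
  univ.filter fun t => ¬ IsSquare t

noncomputable def nonzeroSquares (K : Type*) [Field K] [Fintype K] : Finset K :=
  univ.filter fun t => t ≠ 0 ∧ IsSquare t

@[simp]
lemma mem_nonsquares {t : K} : t ∈ nonsquares K ↔ ¬ IsSquare t := by
  simp [nonsquares]

@[simp]
lemma mem_nonzeroSquares {t : K} : t ∈ nonzeroSquares K ↔ t ≠ 0 ∧ IsSquare t := by
  simp [nonzeroSquares]

lemma ne_zero_of_mem_nonsquares {t : K} (ht : t ∈ nonsquares K) : t ≠ 0 := by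
  rintro rfl
  exact mem_nonsquares.1 ht IsSquare.zero

lemma image_mul_nonsquares {s : K} (hs : s ≠ 0) :
    (nonsquares K).image (· * s) = if IsSquare s then nonsquares K else nonzeroSquares K := by
  ext t
  have hmem : t ∈ (nonsquares K).image (· * s) ↔ ¬ IsSquare (t * s⁻¹) := by
    refine ⟨?_, fun h => mem_image.2 ⟨t * s⁻¹, mem_nonsquares.2 h, by field_simp⟩⟩
    rw [mem_image]
    rintro ⟨a, ha, rfl⟩
    simpa [hs] using ha
  rw [hmem]
  rcases eq_or_ne t 0 with rfl | ht
  · split_ifs <;> simp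
  · rw [isSquare_mul_iff_of_ne_zero ht (inv_ne_zero hs), isSquare_inv]
    split_ifs <;> simp [ht] <;> tauto

lemma sum_nonsquares_mul {M : Type*} [AddCommMonoid M] (f : K → M) {s : K} (hs : s ≠ 0) :
    ∑ a ∈ nonsquares K, f (a * s) =
      if IsSquare s then ∑ a ∈ nonsquares K, f a else ∑ a ∈ nonzeroSquares K, f a := by
  rw [← sum_image (mul_left_injective₀ hs).injOn, image_mul_nonsquares hs]
  split_ifs <;> rfl

lemma card_nonzeroSquares (hK : ringChar K ≠ 2) : #(nonzeroSquares K) = #(nonsquares K) := by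
  obtain ⟨g, hg⟩ := FiniteField.exists_nonsquare hK
  have hg0 : g ≠ 0 := ne_zero_of_mem_nonsquares (mem_nonsquares.2 hg)
  have himage := image_mul_nonsquares hg0
  rw [if_neg hg] at himage
  rw [← himage, card_image_of_injective _ (mul_left_injective₀ hg0)]

lemma add_sum_nonzeroSquares_add_sum_nonsquares {M : Type*} [AddCommMonoid M] (f : K → M) :
    f 0 + ∑ a ∈ nonzeroSquares K, f a + ∑ a ∈ nonsquares K, f a = ∑ a, f a := by
  have hsq : univ.filter (fun t : K => IsSquare t) = insert 0 (nonzeroSquares K) := by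
    ext t
    rcases eq_or_ne t 0 with rfl | ht <;> simp [*]
  rw [← sum_filter_add_sum_filter_not univ (fun t : K => IsSquare t), hsq,
    sum_insert (by simp)]
  rfl

lemma two_mul_card_nonsquares_add_one (hK : ringChar K ≠ 2) :
    2 * #(nonsquares K) + 1 = Fintype.card K := by
  have := add_sum_nonzeroSquares_add_sum_nonsquares (fun _ : K => 1)
  simp only [sum_const, smul_eq_mul, mul_one, card_univ, card_nonzeroSquares hK] at this
  omega

lemma sum_ite_ite {ι M : Type*} [AddCommMonoid M] (s : Finset ι) (p q : ι → Prop)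
    [DecidablePred p] [DecidablePred q] (a b c : M) :
    ∑ i ∈ s, (if p i then a else if q i then b else c) =
      #{i ∈ s | p i} • a + #{i ∈ s | ¬ p i ∧ q i} • b + #{i ∈ s | ¬ p i ∧ ¬ q i} • c := by
  simp only [sum_ite, sum_const, filter_filter, add_assoc]

lemma card_nonsquares_filter_one_add_not_isSquare :
    #{c ∈ nonsquares K | 1 + c ≠ 0 ∧ ¬ IsSquare (1 + c)} =
      #{c ∈ nonsquares K | 1 + c ≠ 0 ∧ IsSquare (1 + c)} := by
  refine card_nbij' (·⁻¹) (·⁻¹) ?_ ?_ (fun c _ => inv_inv c) (fun c _ => inv_inv c) <;>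
  · intro c hc
    simp only [coe_filter, mem_nonsquares, Set.mem_ofPred_eq] at hc ⊢
    obtain ⟨hc, h1c, hsq⟩ := hc
    have hc0 : c ≠ 0 := by rintro rfl; exact hc IsSquare.zero
    have heq : 1 + c⁻¹ = (1 + c) * c⁻¹ := by field_simp; ring
    rw [heq, isSquare_inv, isSquare_mul_iff_of_ne_zero h1c (inv_ne_zero hc0), isSquare_inv]
    exact ⟨hc, mul_ne_zero h1c (inv_ne_zero hc0), by tauto⟩

variable {R : Type*} [CommRing R] (ψ : AddChar K R)

lemma sum_nonsquares_add_sum_nonzeroSquares (hψ : ∑ a, ψ a = 0) :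
    ∑ a ∈ nonsquares K, ψ a + ∑ a ∈ nonzeroSquares K, ψ a = -1 := by
  have := add_sum_nonzeroSquares_add_sum_nonsquares ψ
  rw [AddChar.map_zero_eq_one, hψ] at this
  linear_combination this

lemma sum_nonsquares_apply_mul (s : K) :
    ∑ a ∈ nonsquares K, ψ (a * s) =
      if s = 0 then (#(nonsquares K) : R)
      else if IsSquare s then ∑ a ∈ nonsquares K, ψ a else ∑ a ∈ nonzeroSquares K, ψ a := by
  rcases eq_or_ne s 0 with rfl | hs
  · simp
  · rw [if_neg hs, sum_nonsquares_mul ψ hs]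

lemma sum_nonsquares_mul_sum_nonzeroSquares_eq_sum_sum :
    (∑ a ∈ nonsquares K, ψ a) * ∑ b ∈ nonzeroSquares K, ψ b =
      ∑ c ∈ nonsquares K, ∑ a ∈ nonsquares K, ψ (a * (1 + c)) := by
  rw [sum_mul_sum]
  conv_rhs => rw [sum_comm]
  refine sum_congr rfl fun a ha => ?_
  have hshift := sum_nonsquares_mul (fun b => ψ a * ψ b) (ne_zero_of_mem_nonsquares ha)
  rw [if_neg (mem_nonsquares.1 ha)] at hshift
  rw [← hshift]
  refine sum_congr rfl fun c _ => ?_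
  rw [← AddChar.map_add_eq_mul]
  ring_nf

lemma sum_nonsquares_mul_sum_nonzeroSquares_eq_card_sub_card (hψ : ∑ a, ψ a = 0) :
    (∑ a ∈ nonsquares K, ψ a) * ∑ b ∈ nonzeroSquares K, ψ b =
      #{c ∈ nonsquares K | 1 + c = 0} * #(nonsquares K) -
        #{c ∈ nonsquares K | 1 + c ≠ 0 ∧ IsSquare (1 + c)} := by
  rw [sum_nonsquares_mul_sum_nonzeroSquares_eq_sum_sum,
    sum_congr rfl fun c _ => sum_nonsquares_apply_mul ψ (1 + c),
    sum_ite_ite _ (fun c => 1 + c = 0) (fun c => IsSquare (1 + c))]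
  simp only [← ne_eq, card_nonsquares_filter_one_add_not_isSquare, nsmul_eq_mul]
  linear_combination (↑(#{c ∈ nonsquares K | 1 + c ≠ 0 ∧ IsSquare (1 + c)}) : R) *
    sum_nonsquares_add_sum_nonzeroSquares ψ hψ

lemma card_nonsquares_filter_one_add_eq_zero :
    #{c ∈ nonsquares K | 1 + c = 0} = if IsSquare (-1 : K) then 0 else 1 := by
  have : {c ∈ nonsquares K | 1 + c = 0} = {c ∈ nonsquares K | c = -1} := by
    refine filter_congr fun c _ => ?_
    rw [add_comm, add_eq_zero_iff_eq_neg]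
  rw [this]
  split_ifs with h
  · exact card_eq_zero.2 (filter_eq_empty_iff.2 fun c hc hc' => mem_nonsquares.1 hc (hc' ▸ h))
  · refine card_eq_one.2 ⟨-1, ?_⟩
    ext c
    simp only [mem_filter, mem_nonsquares, mem_singleton]
    exact ⟨And.right, fun hc => ⟨hc ▸ h, hc⟩⟩

theorem sum_nonsquares_mul_sum_nonzeroSquares (hK : ringChar K ≠ 2) (hψ : ∑ a, ψ a = 0) :
    (∑ a ∈ nonsquares K, ψ a) * ∑ b ∈ nonzeroSquares K, ψ b =
      if IsSquare (-1 : K) then -((Fintype.card K / 4 : ℕ) : R)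
      else ((Fintype.card K / 4 + 1 : ℕ) : R) := by
  have hpartition := sum_ite_ite (nonsquares K) (fun c : K => 1 + c = 0) (IsSquare <| 1 + ·) 1 1 1
  simp only [ite_self, sum_const, smul_eq_mul, mul_one, ← ne_eq,
    card_nonsquares_filter_one_add_not_isSquare] at hpartition
  have hcard := two_mul_card_nonsquares_add_one hK
  rw [sum_nonsquares_mul_sum_nonzeroSquares_eq_card_sub_card ψ hψ]
  rw [card_nonsquares_filter_one_add_eq_zero] at hpartition ⊢
  split_ifs at hpartition ⊢
  · have hq : Fintype.card K / 4 = #{c ∈ nonsquares K | 1 + c ≠ 0 ∧ IsSquare (1 + c)} := by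
      omega
    simp [hq]
  · have hq : Fintype.card K / 4 = #{c ∈ nonsquares K | 1 + c ≠ 0 ∧ IsSquare (1 + c)} := by
      omega
    rw [hpartition, hq]
    push_cast
    ring

theorem sum_nonsquares_mul_sum_nonsquares_add_one (hK : ringChar K ≠ 2) (hψ : ∑ a, ψ a = 0) :
    (∑ a ∈ nonsquares K, ψ a) * (∑ a ∈ nonsquares K, ψ a + 1) =
      if IsSquare (-1 : K) then ((Fintype.card K / 4 : ℕ) : R)
      else -((Fintype.card K / 4 + 1 : ℕ) : R) := by
  have hsum := sum_nonsquares_add_sum_nonzeroSquares ψ hψ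
  have hprod := sum_nonsquares_mul_sum_nonzeroSquares ψ hK hψ
  split_ifs at hprod ⊢ <;> linear_combination (∑ a ∈ nonsquares K, ψ a) * hsum - hprod

end NonsquarePeriods

lemma pow_eq_one_of_geom_sum_eq_zero {R : Type*} [CommRing R] {ζ : R} {n : ℕ}
    (h : ∑ i ∈ range n, ζ ^ i = 0) : ζ ^ n = 1 := by
  rw [← sub_eq_zero, ← geom_sum_mul, h, zero_mul]

lemma coeff_zero_eq_coeff_one_of_geom_sum_dvd {R : Type*} [CommRing R] {n : ℕ} (hn : 2 ≤ n)
    {P : R[X]} (hdvd : (∑ i ∈ range n, X ^ i) ∣ P) (hP : P.natDegree < n) :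
    P.coeff 0 = P.coeff 1 := by
  nontriviality R
  obtain ⟨r, rfl⟩ := hdvd
  have hmonic : (∑ i ∈ range n, (X : R[X]) ^ i).Monic := monic_geom_sum_X (by omega)
  have hdeg : (∑ i ∈ range n, (X : R[X]) ^ i).natDegree + 1 = n := by
    have := congrArg natDegree (geom_sum_mul (X : R[X]) n)
    rwa [← C_1, hmonic.natDegree_mul (monic_X_sub_C 1), natDegree_X_sub_C,
      natDegree_X_pow_sub_C] at this
  rcases eq_or_ne r 0 with rfl | hr
  · simp
  rw [hmonic.natDegree_mul' hr] at hP
  rw [eq_C_of_natDegree_eq_zero (by omega : r.natDegree = 0)]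
  simp [coeff_mul_C, coeff_X_pow, show 0 < n by omega, show 1 < n by omega]

lemma natDegree_sum_X_pow_lt {R : Type*} [Semiring R] {n : ℕ} (hn : 0 < n) {S : Finset ℕ}
    (hS : ∀ i ∈ S, i < n) : (∑ i ∈ S, (X : R[X]) ^ i).natDegree < n := by
  refine lt_of_le_of_lt (natDegree_sum_le_of_forall_le _ _ fun i hi => ?_) (Nat.sub_lt hn one_pos)
  exact (natDegree_X_pow_le i).trans (Nat.le_sub_one_of_lt (hS i hi))

lemma mk_sum_X_pow_add_one_ne_zero {R : Type*} [CommRing R] [Nontrivial R] {n : ℕ} (hn : 2 ≤ n)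
    {S : Finset ℕ} (hS : S ⊆ Ico 2 n) :
    Ideal.Quotient.mk (Ideal.span {∑ i ∈ range n, (X : R[X]) ^ i}) (∑ i ∈ S, X ^ i) + 1 ≠ 0 := by
  rw [← map_one (Ideal.Quotient.mk _), ← map_add, Ne, Ideal.Quotient.eq_zero_iff_mem,
    Ideal.mem_span_singleton]
  intro hdvd
  have hdeg : (∑ i ∈ S, X ^ i + 1 : R[X]).natDegree < n :=
    (natDegree_add_le _ _).trans_lt (max_lt (natDegree_sum_X_pow_lt (by omega)
      fun i hi => (mem_Ico.1 (hS hi)).2) (by simp; omega))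
  have hsmall : ∀ j < 2, j ∉ S := fun j hj hjS => by have := (mem_Ico.1 (hS hjS)).1; omega
  have := coeff_zero_eq_coeff_one_of_geom_sum_dvd hn hdvd hdeg
  simp [finsetSum_coeff, coeff_X_pow, coeff_one, hsmall] at this

lemma sum_range_natCast {n : ℕ} [NeZero n] {M : Type*} [AddCommMonoid M] (f : ZMod n → M) :
    ∑ i ∈ range n, f i = ∑ t, f t := by
  refine sum_nbij' (fun i : ℕ => (i : ZMod n)) ZMod.val (fun _ _ => mem_univ _)
    (fun t _ => mem_range.2 t.val_lt) (fun i hi => ?_) (fun t _ => ZMod.natCast_zmod_val t)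
    (fun _ _ => rfl)
  rw [ZMod.val_natCast, Nat.mod_eq_of_lt (mem_range.1 hi)]

lemma sum_filter_range_natCast {n : ℕ} [NeZero n] {M : Type*} [AddCommMonoid M]
    (P : ZMod n → Prop) [DecidablePred P] (f : ZMod n → M) :
    ∑ i ∈ (range n).filter (fun i : ℕ => P i), f i = ∑ t ∈ univ.filter P, f t := by
  rw [sum_filter, sum_filter, sum_range_natCast fun t => if P t then f t else 0]

lemma sum_zmodChar_eq_zero {R : Type*} [CommRing R] {n : ℕ} [NeZero n] {ζ : R}
    (h : ∑ i ∈ range n, ζ ^ i = 0) :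
    ∑ t, AddChar.zmodChar n (pow_eq_one_of_geom_sum_eq_zero h) t = 0 := by
  rw [← h, ← sum_range_natCast]
  simp [AddChar.zmodChar_apply']

lemma filter_Ico_one_eq_filter_range {n : ℕ} (P : ℕ → Prop) [DecidablePred P] (hP : ¬ P 0) :
    (Ico 1 n).filter P = (range n).filter P := by
  ext i
  simp only [mem_filter, mem_Ico, mem_range]
  refine ⟨fun h => ⟨h.1.2, h.2⟩, fun h => ⟨⟨Nat.pos_of_ne_zero ?_, h.1⟩, h.2⟩⟩
  rintro rfl
  exact hP h.2

lemma isUnit_iff_not_dvd_of_mul_add_one_eq (F : Type*) {A : Type*} [Field F] [CommRing A]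
    [Algebra F A] {p : ℕ} [CharP F p] {u : A} {k : ℕ} (hu : u + 1 ≠ 0)
    (h : u * (u + 1) = k ∨ u * (u + 1) = -k) : IsUnit u ↔ ¬ p ∣ k := by
  have hk : (k : A) = algebraMap F A k := (map_natCast _ k).symm
  constructor
  · intro hunit hpk
    rw [hk, (CharP.cast_eq_zero_iff F p k).2 hpk, map_zero, neg_zero, or_self] at h
    exact hu (hunit.mul_right_eq_zero.1 h)
  · intro hpk
    have hkunit : IsUnit (k : A) :=
      hk ▸ (Ne.isUnit fun h0 => hpk ((CharP.cast_eq_zero_iff F p k).1 h0)).map _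
    refine isUnit_of_mul_isUnit_left (y := u + 1) ?_
    rcases h with h | h <;> rw [h]
    exacts [hkunit, hkunit.neg]

theorem stmt8_general {F : Type*} [Field F] (p n k : ℕ) [CharP F p]
    (hn : n.Prime) (hn2 : n ≠ 2)
    (hk : (n % 4 = 1 ∧ k = n / 4) ∨ (n % 4 = 3 ∧ k = n / 4 + 1)) :
    IsUnit (Ideal.Quotient.mk
      (Ideal.span {(∑ i ∈ Finset.range n, X ^ i : F[X])})
      (∑ i ∈ (Finset.Ico 1 n).filter (fun i : ℕ => ¬ IsSquare ((i : ZMod n))), X ^ i)) ↔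
    ¬ p ∣ k := by
  rw [filter_Ico_one_eq_filter_range _ (by simp)]
  set NR := (Finset.range n).filter (fun i : ℕ => ¬ IsSquare ((i : ZMod n)))
  have hNR : NR ⊆ Finset.Ico 2 n := fun i hi => by
    obtain ⟨hin, hi⟩ := Finset.mem_filter.1 hi
    have : i ≠ 0 ∧ i ≠ 1 := by constructor <;> rintro rfl <;> simp at hi
    exact Finset.mem_Ico.2 ⟨by omega, Finset.mem_range.1 hin⟩
  have hne := mk_sum_X_pow_add_one_ne_zero (R := F) hn.two_le hNR
  -- `Fact n.Prime` makes `IsSquare` on `ZMod n` decidable through a `Fintype` instance, not the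
  -- classical one of the statement, so facts about membership in `NR` must come before it.
  have : Fact n.Prime := ⟨hn⟩
  set I : Ideal F[X] := Ideal.span {∑ i ∈ Finset.range n, X ^ i}
  have hx : ∑ i ∈ Finset.range n, Ideal.Quotient.mk I X ^ i = 0 := by
    simpa using Ideal.Quotient.eq_zero_iff_mem.2
      (Ideal.mem_span_singleton_self (∑ i ∈ Finset.range n, (X : F[X]) ^ i))
  set ψ := AddChar.zmodChar n (pow_eq_one_of_geom_sum_eq_zero hx)
  have hF : Ideal.Quotient.mk I (∑ i ∈ NR, X ^ i) = ∑ a ∈ nonsquares (ZMod n), ψ a := by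
    simp only [map_sum, map_pow, ← AddChar.zmodChar_apply' (pow_eq_one_of_geom_sum_eq_zero hx)]
    convert sum_filter_range_natCast (fun t : ZMod n => ¬ IsSquare t) ψ using 3
    ext t
    simp [nonsquares]
  have hperiods := sum_nonsquares_mul_sum_nonsquares_add_one ψ
    (by rwa [ZMod.ringChar_zmod_n]) (sum_zmodChar_eq_zero hx)
  simp only [ZMod.card, ZMod.exists_sq_eq_neg_one_iff] at hperiods
  refine isUnit_iff_not_dvd_of_mul_add_one_eq F hne ?_
  rw [hF, hperiods]
  rcases hk with ⟨h4, rfl⟩ | ⟨h4, rfl⟩ <;> simp [h4]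

/-- For an odd prime `n ≠ p`, the quadratic-nonresidue indicator polynomial
`∑_{i ∈ NR(n)} X^i` has unit image in `F_q[X]/(Q_n)` if and only if `p` does not divide
the integer `k*` nearest to `n/4`. -/
theorem stmt8 {F : Type*} [Field F] [Fintype F] (p n k : ℕ) [Fact p.Prime] [CharP F p]
    (hn : n.Prime) (hn2 : n ≠ 2) (hnp : n ≠ p)
    (hk : (n % 4 = 1 ∧ k = n / 4) ∨ (n % 4 = 3 ∧ k = n / 4 + 1)) :
    IsUnit (Ideal.Quotient.mk
      (Ideal.span {(∑ i ∈ Finset.range n, X ^ i : F[X])})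
      (∑ i ∈ (Finset.Ico 1 n).filter (fun i : ℕ => ¬ IsSquare ((i : ZMod n))), X ^ i)) ↔
    ¬ p ∣ k :=
  stmt8_general p n k hn hn2 hk
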